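/- Let Λ be a lattice in an LCA group G and Ω a measurable set with 0 < |Ω| < ∞. Suppose there exists ψ ∈ L²(Ω) with 0 < A ≤ |ψ|² ≤ B < ∞ a.e. on Ω such that the modulates {M_{λ̃}ψ : λ̃ ∈ Λ⊥} form a frame for L²(Ω). Then the exponential system {e_{λ̃} : λ̃ ∈ Λ⊥} is itself a frame for L²(Ω), and hence (Ω, Λ) is a sub-tiling pair. -/

import Mathlib

/-!
Since `|ψ|² ≥ A > 0`, every `f ∈ L²(Ω)` can be written as `f = f₀ · conj ψ` with
`f₀ = f / conj ψ ∈ L²(Ω)`, and then `⟨f₀, M_λ ψ⟩ = ⟨f, e_λ⟩` while `A‖f₀‖² ≤ ‖f‖² ≤ B‖f₀‖²`; so the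
frame bounds of the modulates transfer to the exponentials at the cost of a factor `B/A`.

For sub-tiling, fix `l ∈ Λ \ {1}` and a measurable `S ⊆ Ω ∩ Ωl` with `Sl⁻¹ ⊆ Ω`. Every
`λ ∈ Λ⊥` is `l`-periodic, so by right invariance of Haar measure `1_S - 1_{Sl⁻¹}` is orthogonal to
all exponentials; the lower frame bound forces it to vanish, i.e. `|S \ Sl⁻¹| = 0`. Applying this
to `S = (Ω ∩ Ωl) ∩ U` for `U` in a countable basis, almost every `x ∈ Ω ∩ Ωl` has `xl` in every
basic neighbourhood of `x`, which is impossible in a Hausdorff space since `xl ≠ x`.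
-/

open MeasureTheory
open scoped ComplexConjugate


open scoped Pointwise

/-- The annihilator (dual lattice) `Λ⊥` of a subgroup `Λ`: all continuous characters
of `G` that are trivial on `Λ`. -/
def dualLattice (G : Type*) [CommGroup G] [TopologicalSpace G] [IsTopologicalGroup G]
    (Λ : Subgroup G) : Subgroup (PontryaginDual G) where
  carrier := {χ : PontryaginDual G | ∀ l ∈ Λ, χ l = 1}
  one_mem' := by intro l _; rfl
  mul_mem' := by
    intro χ ψ hχ hψ l hl
    show χ l * ψ l = 1
    rw [hχ l hl, hψ l hl, mul_one]
  inv_mem' := by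
    intro χ hχ l hl
    show (χ l)⁻¹ = 1
    rw [hχ l hl, inv_one]

section Frame

variable {α ι : Type*} [MeasurableSpace α] {ν : Measure α}

def HasFrameBounds (ν : Measure α) (e : ι → α → ℂ) (A B : ℝ) : Prop :=
  ∀ f : α → ℂ, MemLp f 2 ν →
    A * ∫ x, ‖f x‖ ^ 2 ∂ν ≤ ∑' i, ‖∫ x, f x * conj (e i x) ∂ν‖ ^ 2 ∧
      ∑' i, ‖∫ x, f x * conj (e i x) ∂ν‖ ^ 2 ≤ B * ∫ x, ‖f x‖ ^ 2 ∂ν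

theorem HasFrameBounds.mono_upper {e : ι → α → ℂ} {A B B' : ℝ} (h : HasFrameBounds ν e A B)
    (hB : B ≤ B') : HasFrameBounds ν e A B' := fun f hf =>
  ⟨(h f hf).1, (h f hf).2.trans <|
    mul_le_mul_of_nonneg_right hB (integral_nonneg fun _ => sq_nonneg _)⟩

theorem HasFrameBounds.ae_eq_zero_of_forall_integral_eq_zero {e : ι → α → ℂ} {A B : ℝ}
    (h : HasFrameBounds ν e A B) (hA : 0 < A) {f : α → ℂ} (hf : MemLp f 2 ν)
    (horth : ∀ i, ∫ x, f x * conj (e i x) ∂ν = 0) : f =ᵐ[ν] 0 := by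
  have hlow := (h f hf).1
  simp only [horth, norm_zero, zero_pow two_ne_zero, tsum_zero] at hlow
  have hnorm : ∫ x, ‖f x‖ ^ 2 ∂ν = 0 :=
    le_antisymm (nonpos_of_mul_nonpos_right hlow hA) (integral_nonneg fun _ => sq_nonneg _)
  filter_upwards [(integral_eq_zero_iff_of_nonneg (fun _ => sq_nonneg _)
    (hf.integrable_norm_pow two_ne_zero)).1 hnorm] with x hx
  simpa using hx

theorem MeasureTheory.MemLp.div_of_le_norm_sq {p : ENNReal} {f ψ : α → ℂ} {A : ℝ}
    (hf : MemLp f p ν) (hψ : AEStronglyMeasurable ψ ν) (hA : 0 < A) (hψA : ∀ᵐ x ∂ν, A ≤ ‖ψ x‖ ^ 2) :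
    MemLp (fun x => f x / ψ x) p ν := by
  refine hf.of_le_mul (c := (Real.sqrt A)⁻¹)
    (hf.1.aemeasurable.div hψ.aemeasurable).aestronglyMeasurable ?_
  filter_upwards [hψA] with x hx
  rw [norm_div, div_eq_inv_mul]
  gcongr
  exact (Real.sqrt_le_left (norm_nonneg _)).2 hx

theorem integral_norm_sq_div_bounds {f ψ : α → ℂ} {A B : ℝ} (hf : MemLp f 2 ν)
    (hf₀ : MemLp (fun x => f x / ψ x) 2 ν) (hA : 0 < A)
    (hbounds : ∀ᵐ x ∂ν, A ≤ ‖ψ x‖ ^ 2 ∧ ‖ψ x‖ ^ 2 ≤ B) :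
    A * ∫ x, ‖f x / ψ x‖ ^ 2 ∂ν ≤ ∫ x, ‖f x‖ ^ 2 ∂ν ∧
      ∫ x, ‖f x‖ ^ 2 ∂ν ≤ B * ∫ x, ‖f x / ψ x‖ ^ 2 ∂ν := by
  have hsq : ∀ᵐ x ∂ν, ‖f x‖ ^ 2 = ‖ψ x‖ ^ 2 * ‖f x / ψ x‖ ^ 2 := hbounds.mono fun x hx => by
    have hψ : ‖ψ x‖ ^ 2 ≠ 0 := (hA.trans_le hx.1).ne'
    rw [norm_div, div_pow, mul_div_cancel₀ _ hψ]
  have hint := hf.integrable_norm_pow two_ne_zero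
  have hint₀ := hf₀.integrable_norm_pow two_ne_zero
  rw [← integral_const_mul, ← integral_const_mul]
  constructor
  · refine integral_mono_ae (hint₀.const_mul A) hint ?_
    filter_upwards [hbounds, hsq] with x hx hx'
    rw [hx']
    exact mul_le_mul_of_nonneg_right hx.1 (sq_nonneg _)
  · refine integral_mono_ae hint (hint₀.const_mul B) ?_
    filter_upwards [hbounds, hsq] with x hx hx'
    rw [hx']
    exact mul_le_mul_of_nonneg_right hx.2 (sq_nonneg _)

theorem HasFrameBounds.of_mul {e : ι → α → ℂ} {ψ : α → ℂ} {A B A' B' : ℝ}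
    (h : HasFrameBounds ν (fun i x => e i x * ψ x) A' B') (hψ : AEStronglyMeasurable ψ ν)
    (hA : 0 < A) (hB : 0 < B) (hA' : 0 ≤ A') (hB' : 0 ≤ B')
    (hbounds : ∀ᵐ x ∂ν, A ≤ ‖ψ x‖ ^ 2 ∧ ‖ψ x‖ ^ 2 ≤ B) :
    HasFrameBounds ν e (A' / B) (B' / A) := by
  intro f hf
  have hbounds' : ∀ᵐ x ∂ν, A ≤ ‖conj (ψ x)‖ ^ 2 ∧ ‖conj (ψ x)‖ ^ 2 ≤ B := by
    simpa only [Complex.norm_conj] using hbounds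
  have hf₀ : MemLp (fun x => f x / conj (ψ x)) 2 ν :=
    hf.div_of_le_norm_sq (Complex.continuous_conj.comp_aestronglyMeasurable hψ) hA
      (hbounds'.mono fun _ => And.left)
  have hcoeff : ∀ i, ∫ x, f x / conj (ψ x) * conj (e i x * ψ x) ∂ν =
      ∫ x, f x * conj (e i x) ∂ν := fun i => integral_congr_ae <| hbounds'.mono fun x hx => by
    have hψx : conj (ψ x) ≠ 0 := norm_ne_zero_iff.1 (pow_ne_zero_iff two_ne_zero |>.1
      (hA.trans_le hx.1).ne')
    simp only [map_mul]
    field_simp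
  obtain ⟨hlow, hup⟩ := h _ hf₀
  simp only [hcoeff] at hlow hup
  obtain ⟨hAf, hfB⟩ := integral_norm_sq_div_bounds hf hf₀ hA hbounds'
  constructor
  · calc A' / B * ∫ x, ‖f x‖ ^ 2 ∂ν
        ≤ A' / B * (B * ∫ x, ‖f x / conj (ψ x)‖ ^ 2 ∂ν) := by gcongr
      _ = A' * ∫ x, ‖f x / conj (ψ x)‖ ^ 2 ∂ν := by field_simp
      _ ≤ _ := hlow
  · calc _ ≤ B' * ∫ x, ‖f x / conj (ψ x)‖ ^ 2 ∂ν := hup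
      _ = B' / A * (A * ∫ x, ‖f x / conj (ψ x)‖ ^ 2 ∂ν) := by field_simp
      _ ≤ B' / A * ∫ x, ‖f x‖ ^ 2 ∂ν := by gcongr

end Frame

theorem measure_eq_zero_of_forall_isOpen_diff_preimage {X : Type*} [TopologicalSpace X]
    [SecondCountableTopology X] [T2Space X] [MeasurableSpace X] (μ : Measure X) {T : X → X}
    (hT : ∀ x, T x ≠ x) {E : Set X} (h : ∀ U, IsOpen U → μ ((E ∩ U) \ T ⁻¹' (E ∩ U)) = 0) :
    μ E = 0 := by
  obtain ⟨b, hbc, -, hb⟩ := TopologicalSpace.exists_countable_basis X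
  refine measure_mono_null (fun x hx => ?_)
    ((measure_biUnion_null_iff hbc).2 fun U hU => h U (hb.isOpen hU))
  obtain ⟨V, W, hV, -, hxV, hTxW, hVW⟩ := t2_separation (hT x).symm
  obtain ⟨U, hUb, hxU, hUV⟩ := hb.exists_subset_of_mem_open hxV hV
  exact Set.mem_biUnion hUb ⟨⟨hx, hxU⟩, fun hTx => Set.disjoint_left.1 hVW (hUV hTx.2) hTxW⟩

section Translation

variable {G : Type*} [Group G] [MeasurableSpace G] [MeasurableMul G] (μ : Measure G)
  [μ.IsMulRightInvariant]

theorem setIntegral_preimage_mul_right_of_periodic {E : Type*} [NormedAddCommGroup E]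
    [NormedSpace ℝ E] {φ : G → E} {l : G} (hφ : ∀ x, φ (x * l) = φ x) (S : Set G) :
    ∫ x in (· * l) ⁻¹' S, φ x ∂μ = ∫ x in S, φ x ∂μ := by
  simpa only [hφ] using
    (measurePreserving_mul_right μ l).setIntegral_preimage_emb (measurableEmbedding_mulRight l) φ S

theorem setIntegral_indicator_sub_indicator_preimage_mul_right_mul_eq_zero {φ : G → ℂ} {l : G}
    (hφ : ∀ x, φ (x * l) = φ x) {Ω S : Set G} (hφΩ : IntegrableOn φ Ω μ) (hS : MeasurableSet S)
    (hSΩ : S ⊆ Ω) (hS'Ω : (· * l) ⁻¹' S ⊆ Ω) :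
    ∫ x in Ω, (S.indicator 1 x - ((· * l) ⁻¹' S).indicator 1 x) * φ x ∂μ = 0 := by
  have hS' : MeasurableSet ((· * l) ⁻¹' S) := measurable_mul_const l hS
  have hind : ∀ T : Set G, (fun x => T.indicator 1 x * φ x) = T.indicator φ := fun T =>
    funext fun x => by by_cases hx : x ∈ T <;> simp [hx]
  simp_rw [sub_mul]
  rw [integral_sub (by rw [hind]; exact hφΩ.indicator hS) (by rw [hind]; exact hφΩ.indicator hS'),
    hind, hind, integral_indicator hS, integral_indicator hS', Measure.restrict_restrict hS,
    Measure.restrict_restrict hS', Set.inter_eq_left.2 hSΩ, Set.inter_eq_left.2 hS'Ω,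
    setIntegral_preimage_mul_right_of_periodic μ hφ, sub_self]

variable {ι : Type*} {e : ι → G → ℂ} {Ω : Set G} {l : G}

theorem measure_diff_preimage_mul_right_eq_zero (hΩ : MeasurableSet Ω) (hΩfin : μ Ω ≠ ⊤)
    (he : ∀ i x, e i (x * l) = e i x) (heΩ : ∀ i, IntegrableOn (e i) Ω μ)
    (hcomplete : ∀ f : G → ℂ, MemLp f 2 (μ.restrict Ω) →
      (∀ i, ∫ x in Ω, f x * conj (e i x) ∂μ = 0) → f =ᵐ[μ.restrict Ω] 0)
    {S : Set G} (hS : MeasurableSet S) (hSΩ : S ⊆ Ω) (hS'Ω : (· * l) ⁻¹' S ⊆ Ω) :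
    μ (S \ (· * l) ⁻¹' S) = 0 := by
  have : IsFiniteMeasure (μ.restrict Ω) := isFiniteMeasure_restrict.2 hΩfin
  have hS' : MeasurableSet ((· * l) ⁻¹' S) := measurable_mul_const l hS
  have hf : MemLp (fun x => S.indicator (1 : G → ℂ) x - ((· * l) ⁻¹' S).indicator 1 x) 2
      (μ.restrict Ω) :=
    (memLp_indicator_const (μ := μ.restrict Ω) 2 hS (1 : ℂ) (.inr (measure_ne_top _ _))).sub
      (memLp_indicator_const 2 hS' (1 : ℂ) (.inr (measure_ne_top _ _)))
  have hzero := hcomplete _ hf fun i =>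
    setIntegral_indicator_sub_indicator_preimage_mul_right_mul_eq_zero μ
      (fun x => by rw [he]) ((Complex.conjCLE : ℂ →L[ℝ] ℂ).integrable_comp (heΩ i)) hS hSΩ hS'Ω
  refine measure_mono_null (fun x hx => ?_) (ae_iff.1 ((ae_restrict_iff' hΩ).1 hzero))
  simp [hSΩ hx.1, hx.1, hx.2]

theorem measure_inter_image_mul_right_eq_zero [TopologicalSpace G] [SecondCountableTopology G]
    [T2Space G] [OpensMeasurableSpace G] (hΩ : MeasurableSet Ω) (hΩfin : μ Ω ≠ ⊤)
    (he : ∀ i x, e i (x * l) = e i x) (heΩ : ∀ i, IntegrableOn (e i) Ω μ)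
    (hcomplete : ∀ f : G → ℂ, MemLp f 2 (μ.restrict Ω) →
      (∀ i, ∫ x in Ω, f x * conj (e i x) ∂μ = 0) → f =ᵐ[μ.restrict Ω] 0)
    (hl : l ≠ 1) : μ (Ω ∩ (· * l) '' Ω) = 0 := by
  have hE : MeasurableSet (Ω ∩ (· * l) '' Ω) := by
    rw [Set.image_mul_right]
    exact hΩ.inter (measurable_mul_const _ hΩ)
  refine measure_eq_zero_of_forall_isOpen_diff_preimage μ (T := (· * l)) (by simpa using hl)
    fun U hU => measure_diff_preimage_mul_right_eq_zero μ hΩ hΩfin he heΩ hcomplete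
      (hE.inter hU.measurableSet) (fun x hx => hx.1.1) ?_
  rintro x ⟨⟨-, y, hy, hyx⟩, -⟩
  rwa [← mul_right_cancel hyx]

end Translation

section Characters

variable {G : Type*} [CommGroup G] [TopologicalSpace G]

theorem coe_apply_mul_of_mem_dualLattice [IsTopologicalGroup G] {Λ : Subgroup G}
    {χ : PontryaginDual G} (hχ : χ ∈ dualLattice G Λ) {l : G} (hl : l ∈ Λ) (x : G) : (χ (x * l) : ℂ) = χ x := by
  rw [map_mul, hχ l hl, mul_one]

theorem PontryaginDual.integrableOn_coe [MeasurableSpace G] [OpensMeasurableSpace G]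
    (χ : PontryaginDual G) {μ : Measure G} {Ω : Set G} (hΩ : μ Ω ≠ ⊤) :
    IntegrableOn (fun x => (χ x : ℂ)) Ω μ := by
  have : IsFiniteMeasure (μ.restrict Ω) := isFiniteMeasure_restrict.2 hΩ
  exact Integrable.of_bound (by fun_prop : Continuous fun x => (χ x : ℂ)).aestronglyMeasurable 1
    (ae_of_all _ fun x => (Circle.norm_coe _).le)

end Characters

theorem modulates_frame_implies_exponentials_frame_and_subtiling_general
    {G : Type*} [CommGroup G] [TopologicalSpace G] [IsTopologicalGroup G]
    [T2Space G] [SecondCountableTopology G]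
    [MeasurableSpace G] [BorelSpace G]
    (μ : Measure G) [μ.IsHaarMeasure]
    (Λ : Subgroup G)
    (Ω : Set G) (hΩmeas : MeasurableSet Ω) (hΩfin : μ Ω < ⊤)
    (ψ : G → ℂ) (hψ : MemLp ψ 2 (μ.restrict Ω))
    (A B : ℝ) (hA : 0 < A)
    (hbounds : ∀ᵐ g ∂(μ.restrict Ω), A ≤ ‖ψ g‖ ^ 2 ∧ ‖ψ g‖ ^ 2 ≤ B)
    (hframe : ∃ A' B' : ℝ, 0 < A' ∧
      ∀ f : G → ℂ, MemLp f 2 (μ.restrict Ω) →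
        A' * ∫ g in Ω, ‖f g‖ ^ 2 ∂μ ≤
            (∑' k : dualLattice G Λ,
              ‖∫ g in Ω, f g * conj (((k : PontryaginDual G) g : ℂ) * ψ g) ∂μ‖ ^ 2) ∧
          (∑' k : dualLattice G Λ,
              ‖∫ g in Ω, f g * conj (((k : PontryaginDual G) g : ℂ) * ψ g) ∂μ‖ ^ 2) ≤
            B' * ∫ g in Ω, ‖f g‖ ^ 2 ∂μ) :
    (∃ C D : ℝ, 0 < C ∧
      ∀ f : G → ℂ, MemLp f 2 (μ.restrict Ω) →
        C * ∫ g in Ω, ‖f g‖ ^ 2 ∂μ ≤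
            (∑' k : dualLattice G Λ,
              ‖∫ g in Ω, f g * conj (((k : PontryaginDual G) g : ℂ)) ∂μ‖ ^ 2) ∧
          (∑' k : dualLattice G Λ,
              ‖∫ g in Ω, f g * conj (((k : PontryaginDual G) g : ℂ)) ∂μ‖ ^ 2) ≤
            D * ∫ g in Ω, ‖f g‖ ^ 2 ∂μ) ∧
      (∀ l ∈ Λ, l ≠ 1 → μ (Ω ∩ ((· * l) '' Ω)) = 0) := by
  obtain ⟨A', B', hA', hmodulates⟩ := hframe
  -- `B` and `B'` need not be nonnegative when `μ Ω = 0`, hence the `max`es.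
  have hB : 0 < max A B := lt_max_of_lt_left hA
  have hC : 0 < A' / max A B := div_pos hA' hB
  have hexp : HasFrameBounds (μ.restrict Ω) (fun (k : dualLattice G Λ) g => (k.1 g : ℂ))
      (A' / max A B) (max B' 0 / A) :=
    HasFrameBounds.of_mul (HasFrameBounds.mono_upper hmodulates (le_max_left B' 0)) hψ.1 hA hB
      hA'.le (le_max_right _ _) (hbounds.mono fun _ hg => ⟨hg.1, hg.2.trans (le_max_right A B)⟩)
  refine ⟨⟨_, _, hC, hexp⟩, fun l hl hl1 => ?_⟩
  exact measure_inter_image_mul_right_eq_zero μ (e := fun (k : dualLattice G Λ) g => (k.1 g : ℂ))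
    hΩmeas hΩfin.ne (fun k => coe_apply_mul_of_mem_dualLattice k.2 hl)
    (fun k => PontryaginDual.integrableOn_coe (k : PontryaginDual G) hΩfin.ne)
    (fun _ hf => hexp.ae_eq_zero_of_forall_integral_eq_zero hC hf) hl1

/-- Let `Λ` be a lattice in an LCA group `G` and `Ω` measurable with
`0 < |Ω| < ∞`. Suppose some `ψ ∈ L²(Ω)` with `0 < A ≤ |ψ|² ≤ B < ∞` a.e. on `Ω` is such
that the modulates `{M_{λ̃}ψ : λ̃ ∈ Λ⊥}` form a frame for `L²(Ω)`. Then the exponentials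
`{e_{λ̃} : λ̃ ∈ Λ⊥}` form a frame for `L²(Ω)`, and `(Ω, Λ)` is a sub-tiling pair. -/
theorem modulates_frame_implies_exponentials_frame_and_subtiling
    {G : Type*} [CommGroup G] [TopologicalSpace G] [IsTopologicalGroup G]
    [T2Space G] [LocallyCompactSpace G] [SecondCountableTopology G]
    [MeasurableSpace G] [BorelSpace G]
    (μ : Measure G) [μ.IsHaarMeasure]
    (Λ : Subgroup G) [DiscreteTopology Λ] [CompactSpace (G ⧸ Λ)] [Countable Λ]
    (Ω : Set G) (hΩmeas : MeasurableSet Ω) (hΩpos : 0 < μ Ω) (hΩfin : μ Ω < ⊤)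
    (ψ : G → ℂ) (hψ : MemLp ψ 2 (μ.restrict Ω))
    (A B : ℝ) (hA : 0 < A)
    (hbounds : ∀ᵐ g ∂(μ.restrict Ω), A ≤ ‖ψ g‖ ^ 2 ∧ ‖ψ g‖ ^ 2 ≤ B)
    (hframe : ∃ A' B' : ℝ, 0 < A' ∧
      ∀ f : G → ℂ, MemLp f 2 (μ.restrict Ω) →
        A' * ∫ g in Ω, ‖f g‖ ^ 2 ∂μ ≤
            (∑' k : dualLattice G Λ,
              ‖∫ g in Ω, f g * conj (((k : PontryaginDual G) g : ℂ) * ψ g) ∂μ‖ ^ 2) ∧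
          (∑' k : dualLattice G Λ,
              ‖∫ g in Ω, f g * conj (((k : PontryaginDual G) g : ℂ) * ψ g) ∂μ‖ ^ 2) ≤
            B' * ∫ g in Ω, ‖f g‖ ^ 2 ∂μ) :
    (∃ C D : ℝ, 0 < C ∧
      ∀ f : G → ℂ, MemLp f 2 (μ.restrict Ω) →
        C * ∫ g in Ω, ‖f g‖ ^ 2 ∂μ ≤
            (∑' k : dualLattice G Λ,
              ‖∫ g in Ω, f g * conj (((k : PontryaginDual G) g : ℂ)) ∂μ‖ ^ 2) ∧
          (∑' k : dualLattice G Λ,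
              ‖∫ g in Ω, f g * conj (((k : PontryaginDual G) g : ℂ)) ∂μ‖ ^ 2) ≤
            D * ∫ g in Ω, ‖f g‖ ^ 2 ∂μ) ∧
      (∀ l ∈ Λ, l ≠ 1 → μ (Ω ∩ ((· * l) '' Ω)) = 0) :=
  modulates_frame_implies_exponentials_frame_and_subtiling_general μ Λ Ω hΩmeas hΩfin ψ hψ A B hA
    hbounds hframe
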